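/- For probabilities λ_j = Tr(ρ a_j) with λ₀ = min_j λ_j > 0, if a POVM element family (A_j) satisfies Σ_j ‖A_j − a_j‖ ≤ ε with ε ≤ (λ₀/2)², then for each j: |Tr(ρ A_j) − λ_j| ≤ ε, and the normalized states ρ̂'_j = √ρ A_j √ρ / Tr(ρ A_j) and ρ̂_j = √ρ a_j √ρ / λ_j satisfy ‖ρ̂'_j − ρ̂_j‖₁ ≤ 2ε/λ₀². -/

import Mathlib

open scoped ComplexOrder
open Matrix

noncomputable section

namespace Matrix.PosSemidef

def sqrt {n 𝕜 : Type*} [Fintype n] [DecidableEq n] [RCLike 𝕜] {A : Matrix n n 𝕜}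
    (hA : A.PosSemidef) : Matrix n n 𝕜 :=
  hA.1.eigenvectorUnitary.1 * diagonal ((↑) ∘ Real.sqrt ∘ hA.1.eigenvalues) *
    (star hA.1.eigenvectorUnitary : Matrix n n 𝕜)

end Matrix.PosSemidef

/-- Trace norm: Tr √(A†A). -/
def traceNorm {n : Type*} [Fintype n] [DecidableEq n] (A : Matrix n n ℂ) : ℝ :=
  ((Matrix.posSemidef_conjTranspose_mul_self A).sqrt).trace.re

/-- Operator (sup) norm of a matrix, as the norm of the induced map on ℓ². -/
def opNorm {n : Type*} [Fintype n] [DecidableEq n] (A : Matrix n n ℂ) : ℝ :=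
  ‖LinearMap.toContinuousLinearMap (Matrix.toEuclideanLin A)‖

/-!
Write `s = √ρ` and `X = A_j - a_j`. Since `‖X‖ ≤ ε`, we have `-ε ≤ X ≤ ε` in the Loewner order,
hence `-ερ ≤ sXs ≤ ερ`, and taking traces gives `|τ - λ_j| ≤ ε` for `τ = Tr(ρ A_j)`.
The difference of the normalized states is `τ⁻¹ sXs + (τ⁻¹ - λ_j⁻¹) s a_j s` with
`0 ≤ s a_j s ≤ ρ`, so it lies between `-cρ` and `cρ` for `c = ε/τ + ε/(τ λ_j)`.
A matrix squeezed between `-B` and `B` has trace norm at most `Tr B` (compare its eigenvalues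
with the diagonal of `B` in an eigenbasis), so the trace distance is at most `c ≤ 2ε/λ₀²`.
The last inequality needs `λ₀ ≤ 1/2`, which holds as soon as there are two outcomes; with a
single outcome `A_0 = a_0 = 1` and there is nothing to prove.
-/

open scoped MatrixOrder
open Set

section OrderedModule

variable {E : Type*} [AddCommGroup E] [PartialOrder E] [IsOrderedAddMonoid E] [Module ℝ E]
  [PosSMulMono ℝ E]

lemma smul_mem_Icc_of_mem_Icc {P R : E} (hP : P ∈ Icc 0 R) (t : ℝ) :
    t • P ∈ Icc (-(|t| • R)) (|t| • R) := by
  obtain ⟨hP₀, hPR⟩ := hP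
  have hR : 0 ≤ R := hP₀.trans hPR
  rcases le_or_gt 0 t with ht | ht
  · rw [abs_of_nonneg ht]
    exact ⟨(neg_nonpos.2 (smul_nonneg ht hR)).trans (smul_nonneg ht hP₀),
      smul_le_smul_of_nonneg_left hPR ht⟩
  · obtain ⟨u, hu, rfl⟩ : ∃ u, 0 ≤ u ∧ t = -u := ⟨-t, by linarith, by ring⟩
    rw [abs_neg, abs_of_nonneg hu, neg_smul]
    exact ⟨neg_le_neg (smul_le_smul_of_nonneg_left hPR hu),
      (neg_nonpos.2 (smul_nonneg hu hP₀)).trans (smul_nonneg hu hR)⟩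

lemma inv_smul_sub_inv_smul_mem_Icc {P P' R : E} {τ L ε : ℝ} (hτ : 0 < τ) (hL : 0 < L)
    (hP : P ∈ Icc 0 R) (hP' : P' - P ∈ Icc (-(ε • R)) (ε • R)) (hτL : |τ - L| ≤ ε) :
    τ⁻¹ • P' - L⁻¹ • P ∈
      Icc (-((ε / τ + ε / (τ * L)) • R)) ((ε / τ + ε / (τ * L)) • R) := by
  have hR : 0 ≤ R := hP.1.trans hP.2
  have hδ : |τ⁻¹ - L⁻¹| ≤ ε / (τ * L) := by
    rw [inv_sub_inv hτ.ne' hL.ne', abs_div, abs_of_pos (mul_pos hτ hL), abs_sub_comm]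
    gcongr
  have hsplit : τ⁻¹ • P' - L⁻¹ • P = τ⁻¹ • (P' - P) + (τ⁻¹ - L⁻¹) • P := by module
  have hc : (ε / τ + ε / (τ * L)) • R = τ⁻¹ • (ε • R) + (ε / (τ * L)) • R := by
    rw [smul_smul, ← add_smul, inv_mul_eq_div]
  have hmono : |τ⁻¹ - L⁻¹| • R ≤ (ε / (τ * L)) • R := smul_le_smul_of_nonneg_right hδ hR
  obtain ⟨lo, hi⟩ := smul_mem_Icc_of_mem_Icc hP (τ⁻¹ - L⁻¹)
  have hτ' : 0 ≤ τ⁻¹ := inv_nonneg.2 hτ.le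
  rw [hsplit, hc, mem_Icc, neg_add]
  constructor
  · refine add_le_add ?_ ((neg_le_neg hmono).trans lo)
    rw [← smul_neg]
    exact smul_le_smul_of_nonneg_left hP'.1 hτ'
  · exact add_le_add (smul_le_smul_of_nonneg_left hP'.2 hτ') (hi.trans hmono)

end OrderedModule

lemma le_one_half_of_sum_eq_one {ι : Type*} [Fintype ι] (hι : 2 ≤ Fintype.card ι) {f : ι → ℝ}
    (hf : ∑ i, f i = 1) {c : ℝ} (hc : ∀ i, c ≤ f i) : c ≤ 1 / 2 := by
  have hsum := Finset.card_nsmul_le_sum Finset.univ f c fun i _ => hc i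
  rw [hf, Finset.card_univ, nsmul_eq_mul] at hsum
  have : (2 : ℝ) ≤ Fintype.card ι := by exact_mod_cast hι
  nlinarith

lemma div_add_div_mul_le_two_mul_div_sq {lam0 L τ ε : ℝ} (hlam0 : 0 < lam0) (hhalf : lam0 ≤ 1 / 2)
    (hL : lam0 ≤ L) (hεlam0 : ε ≤ (lam0 / 2) ^ 2) (hτ : |τ - L| ≤ ε) :
    ε / τ + ε / (τ * L) ≤ 2 * ε / lam0 ^ 2 := by
  have hτL := abs_le.mp hτ
  have hLpos : 0 < L := hlam0.trans_le hL
  have hτpos : 0 < τ := by nlinarith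
  have hε : 0 ≤ ε := (abs_nonneg _).trans hτ
  have key : lam0 ^ 2 * (L + 1) ≤ 2 * (τ * L) := by
    nlinarith [mul_nonneg (sub_nonneg.2 hL) hLpos.le, mul_nonneg (mul_nonneg hlam0.le hLpos.le)
      (sub_nonneg.2 hhalf), mul_le_mul_of_nonneg_right hεlam0 hLpos.le,
      mul_nonneg hlam0.le (sub_nonneg.2 hL)]
  rw [div_add_div _ _ hτpos.ne' (by positivity), div_le_div_iff₀ (by positivity) (by positivity)]
  nlinarith [mul_le_mul_of_nonneg_left key hε]

namespace Matrix

variable {n : Type*} [Fintype n]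

lemma re_trace_le_re_trace {X Y : Matrix n n ℂ} (h : X ≤ Y) : X.trace.re ≤ Y.trace.re := by
  have := (le_iff.mp h).trace_nonneg
  rw [trace_sub, sub_nonneg] at this
  exact (Complex.le_def.mp this).1

lemma abs_re_trace_le_of_mem_Icc {ρ M : Matrix n n ℂ} (hρ : ρ.trace = 1) {c : ℝ}
    (hM : M ∈ Icc (-(c • ρ)) (c • ρ)) : |M.trace.re| ≤ c := by
  have lo := re_trace_le_re_trace hM.1
  have hi := re_trace_le_re_trace hM.2
  simp only [trace_neg, trace_smul, hρ, Complex.neg_re, Complex.smul_re, Complex.one_re,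
    smul_eq_mul, mul_one] at lo hi
  exact abs_le.mpr ⟨lo, hi⟩

variable [DecidableEq n]

lemma PosSemidef.sqrt_eq_cfcSqrt {A : Matrix n n ℂ} (hA : A.PosSemidef) :
    hA.sqrt = CFC.sqrt A := by
  rw [CFC.sqrt_eq_cfc, cfc_nnreal_eq_real _ A, hA.1.cfc_eq]
  simp only [IsHermitian.cfc, Unitary.conjStarAlgAut_apply, PosSemidef.sqrt]
  congr 3
  funext i
  simp [Real.coe_sqrt, hA.eigenvalues_nonneg i]

lemma PosSemidef.star_sqrt {ρ : Matrix n n ℂ} (hρ : ρ.PosSemidef) : star hρ.sqrt = hρ.sqrt := by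
  rw [hρ.sqrt_eq_cfcSqrt]
  exact (IsSelfAdjoint.of_nonneg (CFC.sqrt_nonneg ρ)).star_eq

lemma PosSemidef.sqrt_mul_sqrt {ρ : Matrix n n ℂ} (hρ : ρ.PosSemidef) : hρ.sqrt * hρ.sqrt = ρ := by
  rw [hρ.sqrt_eq_cfcSqrt]
  exact CFC.sqrt_mul_sqrt_self ρ hρ.nonneg

lemma PosSemidef.trace_sqrt_mul_mul_sqrt {ρ : Matrix n n ℂ} (hρ : ρ.PosSemidef)
    (X : Matrix n n ℂ) : (hρ.sqrt * X * hρ.sqrt).trace = (ρ * X).trace := by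
  rw [trace_mul_cycle, hρ.sqrt_mul_sqrt]

lemma PosSemidef.sqrt_mul_mul_sqrt_le {ρ X Y : Matrix n n ℂ} (hρ : ρ.PosSemidef) (h : X ≤ Y) :
    hρ.sqrt * X * hρ.sqrt ≤ hρ.sqrt * Y * hρ.sqrt := by
  simpa only [hρ.star_sqrt] using star_left_conjugate_le_conjugate h hρ.sqrt

lemma PosSemidef.sqrt_mul_smul_one_mul_sqrt {ρ : Matrix n n ℂ} (hρ : ρ.PosSemidef) (c : ℝ) :
    hρ.sqrt * (c • 1) * hρ.sqrt = c • ρ := by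
  rw [mul_smul_comm, mul_one, smul_mul_assoc, hρ.sqrt_mul_sqrt]

lemma PosSemidef.sqrt_mul_mul_sqrt_mem_Icc_smul {ρ X : Matrix n n ℂ} (hρ : ρ.PosSemidef) {c : ℝ}
    (hX : X ∈ Icc (-(c • 1)) (c • 1)) :
    hρ.sqrt * X * hρ.sqrt ∈ Icc (-(c • ρ)) (c • ρ) := by
  have lo := hρ.sqrt_mul_mul_sqrt_le hX.1
  have hi := hρ.sqrt_mul_mul_sqrt_le hX.2
  rw [mul_neg, neg_mul, hρ.sqrt_mul_smul_one_mul_sqrt] at lo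
  rw [hρ.sqrt_mul_smul_one_mul_sqrt] at hi
  exact ⟨lo, hi⟩

lemma PosSemidef.sqrt_mul_mul_sqrt_mem_Icc_zero {ρ X : Matrix n n ℂ} (hρ : ρ.PosSemidef)
    (hX : X ∈ Icc 0 1) : hρ.sqrt * X * hρ.sqrt ∈ Icc 0 ρ := by
  have lo := hρ.sqrt_mul_mul_sqrt_le hX.1
  have hi := hρ.sqrt_mul_mul_sqrt_le hX.2
  rw [mul_zero, zero_mul] at lo
  rw [mul_one, hρ.sqrt_mul_sqrt] at hi
  exact ⟨lo, hi⟩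

open scoped Matrix.Norms.L2Operator in
lemma IsHermitian.mem_Icc_of_opNorm_le {X : Matrix n n ℂ} (hX : X.IsHermitian) {c : ℝ}
    (hc : opNorm X ≤ c) : X ∈ Icc (-(c • 1)) (c • 1) := by
  have hnorm : algebraMap ℝ (Matrix n n ℂ) ‖X‖ ≤ c • 1 := by
    rw [Algebra.algebraMap_eq_smul_one]
    exact smul_le_smul_of_nonneg_right hc PosSemidef.one.nonneg
  exact ⟨(neg_le_neg hnorm).trans hX.isSelfAdjoint.neg_algebraMap_norm_le_self,
    hX.isSelfAdjoint.le_algebraMap_norm_self.trans hnorm⟩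

lemma traceNorm_eq_re_trace_abs (M : Matrix n n ℂ) : traceNorm M = (CFC.abs M).trace.re := by
  rw [traceNorm, PosSemidef.sqrt_eq_cfcSqrt]
  rfl

lemma IsHermitian.traceNorm_eq_sum_abs_eigenvalues {M : Matrix n n ℂ} (hM : M.IsHermitian) :
    traceNorm M = ∑ i, |hM.eigenvalues i| := by
  rw [traceNorm_eq_re_trace_abs, CFC.abs_eq_cfc_norm M hM.isSelfAdjoint, hM.cfc_eq,
    IsHermitian.cfc, Unitary.conjStarAlgAut_apply, trace_mul_cycle, Unitary.coe_star_mul_self,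
    one_mul, trace_diagonal]
  simp

lemma traceNorm_zero : traceNorm (0 : Matrix n n ℂ) = 0 := by
  simp [traceNorm_eq_re_trace_abs]

lemma traceNorm_le_re_trace_of_mem_Icc {M B : Matrix n n ℂ} (h : M ∈ Icc (-B) B) :
    traceNorm M ≤ B.trace.re := by
  obtain ⟨h₁, h₂⟩ := h
  have hM : M.IsHermitian := by
    have h : M = (2⁻¹ : ℝ) • ((M - -B) - (B - M)) := by module
    rw [h]
    exact ((le_iff.mp h₁).isHermitian.sub (le_iff.mp h₂).isHermitian).smul (IsSelfAdjoint.all _)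
  set U : Matrix n n ℂ := ↑hM.eigenvectorUnitary
  have hdiag : star U * M * U = diagonal (RCLike.ofReal ∘ hM.eigenvalues) := by
    simpa using hM.conjStarAlgAut_star_eigenvectorUnitary
  set C := star U * B * U
  have hC : ∀ i, |hM.eigenvalues i| ≤ (C i i).re := by
    intro i
    have lo := star_left_conjugate_le_conjugate h₁ U
    have hi := star_left_conjugate_le_conjugate h₂ U
    rw [hdiag, mul_neg, neg_mul] at lo
    rw [hdiag] at hi
    have lo' := (le_iff.mp lo).diag_nonneg (i := i)
    have hi' := (le_iff.mp hi).diag_nonneg (i := i)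
    simp only [sub_apply, neg_apply, diagonal_apply_eq, Function.comp_apply, sub_neg_eq_add,
      Complex.coe_algebraMap, Complex.le_def, Complex.zero_re, Complex.add_re,
      Complex.ofReal_re, sub_nonneg] at lo' hi'
    exact abs_le.mpr ⟨by linarith, by linarith⟩
  calc traceNorm M = ∑ i, |hM.eigenvalues i| := hM.traceNorm_eq_sum_abs_eigenvalues
    _ ≤ ∑ i, (C i i).re := Finset.sum_le_sum fun i _ => hC i
    _ = C.trace.re := by simp only [trace, diag_apply, Complex.re_sum]
    _ = B.trace.re := by
      rw [trace_mul_cycle, Unitary.mul_star_self_of_mem hM.eigenvectorUnitary.2, one_mul]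

end Matrix

theorem stmt_12_general {n : Type*} [Fintype n] [DecidableEq n] {m : ℕ}
    (ρ : Matrix n n ℂ) (hρ : ρ.PosDef) (hρt : ρ.trace = 1)
    (a A : Fin m → Matrix n n ℂ)
    (ha : ∀ j, (a j).PosSemidef) (hasum : ∑ j, a j = 1)
    (hA : ∀ j, (A j).PosSemidef) (hAsum : ∑ j, A j = 1)
    (lam : Fin m → ℝ) (hlam : ∀ j, lam j = (Matrix.trace (ρ * a j)).re)
    (lam0 : ℝ) (hlam0pos : 0 < lam0) (hlam0 : ∀ j, lam0 ≤ lam j)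
    (ε : ℝ) (hε : ε ≤ (lam0 / 2) ^ 2)
    (hclose : ∑ j, opNorm (A j - a j) ≤ ε) :
    ∀ j, |(Matrix.trace (ρ * A j)).re - lam j| ≤ ε ∧
      traceNorm
        (((Matrix.trace (ρ * A j)).re : ℂ)⁻¹ •
            (hρ.posSemidef.sqrt * A j * hρ.posSemidef.sqrt)
         - (lam j : ℂ)⁻¹ • (hρ.posSemidef.sqrt * a j * hρ.posSemidef.sqrt))
        ≤ 2 * ε / lam0 ^ 2 := by
  intro j
  have hρ' := hρ.posSemidef
  have hX := ((hA j).isHermitian.sub (ha j).isHermitian).mem_Icc_of_opNorm_le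
    ((Finset.single_le_sum (f := fun k => opNorm (A k - a k)) (fun k _ => norm_nonneg _)
      (Finset.mem_univ j)).trans hclose)
  have hS := hρ'.sqrt_mul_mul_sqrt_mem_Icc_smul hX
  rw [mul_sub, sub_mul] at hS
  have hτ : |(ρ * A j).trace.re - lam j| ≤ ε := by
    simpa only [trace_sub, Complex.sub_re, hρ'.trace_sqrt_mul_mul_sqrt, ← hlam j]
      using abs_re_trace_le_of_mem_Icc hρt hS
  refine ⟨hτ, ?_⟩
  rcases Nat.lt_or_ge m 2 with hm | hm
  · have : Subsingleton (Fin m) := Fin.subsingleton_iff_le_one.2 (by omega)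
    have hAa : A j = a j := by
      rw [← Fintype.sum_subsingleton A j, ← Fintype.sum_subsingleton a j, hAsum, hasum]
    have hε₀ : 0 ≤ ε := (abs_nonneg _).trans hτ
    rw [hAa, ← hlam j, sub_self, traceNorm_zero]
    positivity
  have hsum : ∑ k, lam k = 1 := by
    simp_rw [hlam]
    rw [← Complex.re_sum, ← trace_sum, ← Finset.mul_sum, hasum, mul_one, hρt, Complex.one_re]
  have hhalf := le_one_half_of_sum_eq_one (by simpa using hm) hsum hlam0
  have hP := hρ'.sqrt_mul_mul_sqrt_mem_Icc_zero
    ⟨(ha j).nonneg, hasum ▸ Finset.single_le_sum (fun k _ => (ha k).nonneg) (Finset.mem_univ j)⟩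
  have hLpos : 0 < lam j := hlam0pos.trans_le (hlam0 j)
  have hτpos : 0 < (ρ * A j).trace.re := by nlinarith [abs_le.mp hτ, hlam0 j]
  rw [← Complex.ofReal_inv, ← Complex.ofReal_inv, Complex.coe_smul, Complex.coe_smul]
  calc traceNorm _ ≤ (_ • ρ).trace.re :=
        traceNorm_le_re_trace_of_mem_Icc (inv_smul_sub_inv_smul_mem_Icc hτpos hLpos hP hS hτ)
    _ = _ := by rw [trace_smul, hρt, Complex.smul_re, Complex.one_re, smul_eq_mul, mul_one]
    _ ≤ 2 * ε / lam0 ^ 2 := div_add_div_mul_le_two_mul_div_sq hlam0pos hhalf (hlam0 j) hε hτ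

/-- stability of the canonical ensemble under perturbation of the POVM. -/
theorem stmt_12 {n : Type*} [Fintype n] [DecidableEq n] {m : ℕ}
    (ρ : Matrix n n ℂ) (hρ : ρ.PosDef) (hρt : ρ.trace = 1)
    (a A : Fin m → Matrix n n ℂ)
    (ha : ∀ j, (a j).PosSemidef) (hasum : ∑ j, a j = 1)
    (hA : ∀ j, (A j).PosSemidef) (hAsum : ∑ j, A j = 1)
    (lam : Fin m → ℝ) (hlam : ∀ j, lam j = (Matrix.trace (ρ * a j)).re)
    (lam0 : ℝ) (hlam0pos : 0 < lam0) (hlam0 : ∀ j, lam0 ≤ lam j)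
    (ε : ℝ) (hεpos : 0 < ε) (hε : ε ≤ (lam0 / 2) ^ 2)
    (hclose : ∑ j, opNorm (A j - a j) ≤ ε) :
    ∀ j, |(Matrix.trace (ρ * A j)).re - lam j| ≤ ε ∧
      traceNorm
        (((Matrix.trace (ρ * A j)).re : ℂ)⁻¹ •
            (hρ.posSemidef.sqrt * A j * hρ.posSemidef.sqrt)
         - (lam j : ℂ)⁻¹ • (hρ.posSemidef.sqrt * a j * hρ.posSemidef.sqrt))
        ≤ 2 * ε / lam0 ^ 2 :=
  stmt_12_general ρ hρ hρt a A ha hasum hA hAsum lam hlam lam0 hlam0pos hlam0 ε hε hclose
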